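/- Let V be a finite-dimensional real inner product space, φ, h′ symmetric endomorphisms with h′φ = −φh′ (anticommuting), φ² = −id + η⊗ζ on V with h′ζ = 0, and suppose a vector w ∈ V satisfies 2(κ+1)w + sζ = 2h′w for some scalar s, where h′² = (κ+1)φ² and κ < −1. Then (κ+2)φw = 0. -/

import Mathlib

/-!
Applying `φ` to `2(κ+1)w + sζ = 2h'w` and using `φh' = -h'φ`, `φζ = 0` shows that `v = φw` is an
eigenvector of `h'` with eigenvalue `c = -(κ+1)`. On the other hand `φ³ = -φ`, so
`h'²v = (κ+1)φ²v = c v`. Hence `c² v = c v`, and `c ≠ 0` forces `(c - 1)v = -(κ+2)v = 0`.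
-/

section

variable {K V : Type*} [Field K] [AddCommGroup V] [Module K V]

theorem LinearMap.apply_apply_apply_eq_neg_of_sq_eq {φ : V →ₗ[K] V} {η : V →ₗ[K] K} {ζ : V}
    (hφ2 : ∀ x, φ (φ x) = -x + η x • ζ) (hφζ : φ ζ = 0) (x : V) :
    φ (φ (φ x)) = -φ x := by
  rw [hφ2 x, map_add, map_neg, map_smul, hφζ, smul_zero, add_zero]

theorem LinearMap.apply_eq_smul_of_anticomm {φ h : V →ₗ[K] V} {ζ w : V} {a b s : K}
    (hanti : ∀ x, φ (h x) = -h (φ x)) (hφζ : φ ζ = 0)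
    (hw : a • w + s • ζ = b • h w) (hb : b ≠ 0) :
    h (φ w) = (-(a / b)) • φ w := by
  have hφw : a • φ w = -(b • h (φ w)) := by
    simpa only [map_add, map_smul, hφζ, smul_zero, add_zero, hanti, smul_neg] using
      congrArg φ hw
  rw [neg_smul, div_eq_inv_mul, mul_smul, hφw, smul_neg, neg_neg, smul_smul,
    inv_mul_cancel₀ hb, one_smul]

theorem LinearMap.sub_one_smul_eq_zero_of_apply_apply_eq {f : V →ₗ[K] V} {v : V} {c : K}
    (hc : c ≠ 0) (h1 : f v = c • v) (h2 : f (f v) = c • v) :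
    (c - 1) • v = 0 := by
  have hfix : c • c • v = c • v :=
    calc c • c • v = f (f v) := by rw [h1, map_smul, h1]
      _ = c • v := h2
  have hsq : (c * (c - 1)) • v = 0 := by
    rw [mul_sub, mul_one, sub_smul, mul_smul, hfix, sub_self]
  rwa [mul_smul, smul_eq_zero, or_iff_right hc] at hsq

end

theorem stmt_18_general {V : Type} [NormedAddCommGroup V] [InnerProductSpace ℝ V]
    (φ h' : V →ₗ[ℝ] V) (η : V →ₗ[ℝ] ℝ) (zeta : V) (κ s : ℝ) (w : V)
    (hanti : ∀ x, φ (h' x) = -h' (φ x))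
    (hphi2 : ∀ x, φ (φ x) = -x + η x • zeta)
    (hphiz : φ zeta = 0)
    (hid : ∀ x, h' (h' x) = (κ + 1) • φ (φ x))
    (hκ : κ < -1)
    (hw : (2 * (κ + 1)) • w + s • zeta = (2 : ℝ) • h' w) :
    (κ + 2) • φ w = 0 := by
  have heigen : h' (φ w) = (-(κ + 1)) • φ w := by
    simpa only [mul_div_cancel_left₀ _ (two_ne_zero' ℝ)] using
      LinearMap.apply_eq_smul_of_anticomm hanti hphiz hw two_ne_zero
  have heigen_sq : h' (h' (φ w)) = (-(κ + 1)) • φ w := by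
    rw [hid, LinearMap.apply_apply_apply_eq_neg_of_sq_eq hphi2 hphiz, smul_neg, neg_smul]
  have hκ1 : -(κ + 1) ≠ 0 := by linarith
  have hzero := LinearMap.sub_one_smul_eq_zero_of_apply_apply_eq hκ1 heigen heigen_sq
  rwa [show -(κ + 1) - 1 = -(κ + 2) by ring, neg_smul, neg_eq_zero] at hzero

/-- Linear-algebraic core of the `(κ,μ)′` gradient soliton
dichotomy: on a finite-dimensional real inner product space with symmetric
anticommuting endomorphisms `φ, h'`, `φ² = −id + η⊗ζ`, `h'ζ = 0`, `φζ = 0`,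
`h'² = (κ+1)φ²` and `κ < −1`, any vector `w` with
`2(κ+1)w + sζ = 2h'w` satisfies `(κ+2)φw = 0`. -/
theorem stmt_18 {V : Type} [NormedAddCommGroup V] [InnerProductSpace ℝ V]
    [FiniteDimensional ℝ V]
    (φ h' : V →ₗ[ℝ] V) (η : V →ₗ[ℝ] ℝ) (zeta : V) (κ s : ℝ) (w : V)
    (hsymφ : φ.IsSymmetric) (hsymh' : h'.IsSymmetric)
    (hanti : ∀ x, φ (h' x) = -h' (φ x))
    (hphi2 : ∀ x, φ (φ x) = -x + η x • zeta)
    (hphiz : φ zeta = 0) (hh'z : h' zeta = 0)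
    (hid : ∀ x, h' (h' x) = (κ + 1) • φ (φ x))
    (hκ : κ < -1)
    (hw : (2 * (κ + 1)) • w + s • zeta = (2 : ℝ) • h' w) :
    (κ + 2) • φ w = 0 :=
  stmt_18_general φ h' η zeta κ s w hanti hphi2 hphiz hid hκ hw
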